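/- Let (A, [·,·]_A) be a finite-dimensional left-Alia algebra over a field K, (A*, [·,·]_{A*}) a left-Alia algebra structure on its dual space, and δ : A → A ⊗ A the linear dual of [·,·]_{A*} (i.e. ⟨[a*,b*]_{A*}, x⟩ = ⟨a* ⊗ b*, δ(x)⟩). Then ((A,[·,·]_A), (A*,[·,·]_{A*}), L_A*, L_A* − R_A*, L_{A*}*, L_{A*}* − R_{A*}*) is a matched pair of left-Alia algebras if and only if (A, [·,·]_A, δ) is a left-Alia bialgebra, i.e. (τ − id^{⊗2})( δ([x,y]_A − [y,x]_A) + (R_A(x) ⊗ id)δ(y) − (R_A(y) ⊗ id)δ(x) ) = 0 for all x,y ∈ A, where τ(u⊗v) = v⊗u, L_A(x)y = [x,y]_A = R_A(y)x, and the stars denote dual maps ⟨l*(x)u*, v⟩ = −⟨u*, l(x)v⟩. -/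
import Mathlib

open TensorProduct

/-- The symmetric Jacobi identity defining left-Alia algebras. -/
def SymJacobi {A : Type*} [Add A] (br : A → A → A) : Prop :=
  ∀ x y z : A,
    br (br x y) z + br (br y z) x + br (br z x) y
      = br (br y x) z + br (br z y) x + br (br x z) y

/-- The bracket on `A ⊕ A*` of the candidate matched pair
`((A,[·,·]_A), (A*,[·,·]_{A*}), L_A*, L_A* − R_A*, L_{A*}*, L_{A*}* − R_{A*}*)`,
where the coadjoint-type actions of `A*` on `A` use the identification `A ≅ A**`. -/
noncomputable def coadjMatchedBracket {K A : Type*} [Field K]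
    [AddCommGroup A] [Module K A] [FiniteDimensional K A]
    (brA : A →ₗ[K] A →ₗ[K] A)
    (brAs : Module.Dual K A →ₗ[K] Module.Dual K A →ₗ[K] Module.Dual K A)
    (p q : A × Module.Dual K A) : A × Module.Dual K A :=
  let e := Module.evalEquiv K A
  (brA p.1 q.1
      + (e.symm.toLinearMap ∘ₗ (-(brAs p.2).dualMap) ∘ₗ e.toLinearMap) q.1
      + (e.symm.toLinearMap ∘ₗ (-(brAs q.2).dualMap + (brAs.flip q.2).dualMap)
          ∘ₗ e.toLinearMap) p.1,
    brAs p.2 q.2 + (-(brA p.1).dualMap) q.2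
      + (-(brA q.1).dualMap + (brA.flip q.1).dualMap) p.2)

section Aux

variable {K A : Type*} [Field K] [AddCommGroup A] [Module K A] [FiniteDimensional K A]
  (brA : A →ₗ[K] A →ₗ[K] A)
  (brAs : Module.Dual K A →ₗ[K] Module.Dual K A →ₗ[K] Module.Dual K A)

/-- Separation of points in the tensor square by simple dual functionals. -/
lemma Alia.tsep (t : A ⊗[K] A)
    (h : ∀ a b : Module.Dual K A, TensorProduct.dualDistrib K A A (a ⊗ₜ b) t = 0) : t = 0 := by
  rw [← Module.forall_dual_apply_eq_zero_iff K]
  intro φ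
  obtain ⟨s, rfl⟩ := (TensorProduct.dualDistribEquiv K A A).surjective φ
  have key : ∀ s : Module.Dual K A ⊗[K] Module.Dual K A,
      TensorProduct.dualDistrib K A A s t = 0 := by
    intro s
    induction s using TensorProduct.induction_on with
    | zero => simp
    | tmul a b => exact h a b
    | add s1 s2 h1 h2 => simp [map_add, LinearMap.add_apply, h1, h2]
  exact key s

omit [FiniteDimensional K A] in
lemma Alia.ddmap (a b : Module.Dual K A) (f : A →ₗ[K] A) (t : A ⊗[K] A) :
    TensorProduct.dualDistrib K A A (a ⊗ₜ b) (TensorProduct.map f LinearMap.id t)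
      = TensorProduct.dualDistrib K A A ((f.dualMap a) ⊗ₜ b) t := by
  induction t using TensorProduct.induction_on with
  | zero => simp
  | tmul u v => simp
  | add t1 t2 h1 h2 => simp [h1, h2]

omit [FiniteDimensional K A] in
lemma Alia.ddcomm (a b : Module.Dual K A) (t : A ⊗[K] A) :
    TensorProduct.dualDistrib K A A (a ⊗ₜ b) (TensorProduct.comm K A A t)
      = TensorProduct.dualDistrib K A A (b ⊗ₜ a) t := by
  induction t using TensorProduct.induction_on with
  | zero => simp
  | tmul u v => simp [mul_comm]
  | add t1 t2 h1 h2 => simp [h1, h2]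

@[simp] lemma Alia.dualMap_zero' : (0 : A →ₗ[K] A).dualMap = 0 := by
  apply LinearMap.ext; intro φ; apply LinearMap.ext; intro v
  simp [LinearMap.dualMap_apply]

lemma Alia.pair_esymm (w : Module.Dual K (Module.Dual K A)) (v : A) (a : Module.Dual K A) :
    a (brA ((Module.evalEquiv K A).symm w) v) = w ((brA.flip v).dualMap a) := by
  have : a (brA ((Module.evalEquiv K A).symm w) v)
      = ((brA.flip v).dualMap a) ((Module.evalEquiv K A).symm w) := rfl
  rw [this, Module.apply_evalEquiv_symm_apply]

/-- The scalar form of the left-Alia bialgebra compatibility condition. -/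
def Alia.StarCond : Prop := ∀ (a b : Module.Dual K A) (x y : A),
    brAs b a (brA x y) - brAs b a (brA y x) + brAs ((brA.flip x).dualMap b) a y
      - brAs ((brA.flip y).dualMap b) a x
      - brAs a b (brA x y) + brAs a b (brA y x) - brAs ((brA.flip x).dualMap a) b y
      + brAs ((brA.flip y).dualMap a) b x = 0

/-- The Jacobiator of the candidate matched-pair bracket. -/
noncomputable def Alia.Jac (p q r : A × Module.Dual K A) : A × Module.Dual K A :=
  coadjMatchedBracket brA brAs (coadjMatchedBracket brA brAs p q) r
    + coadjMatchedBracket brA brAs (coadjMatchedBracket brA brAs q r) p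
    + coadjMatchedBracket brA brAs (coadjMatchedBracket brA brAs r p) q
    - coadjMatchedBracket brA brAs (coadjMatchedBracket brA brAs q p) r
    - coadjMatchedBracket brA brAs (coadjMatchedBracket brA brAs r q) p
    - coadjMatchedBracket brA brAs (coadjMatchedBracket brA brAs p r) q

lemma Alia.symJacobi_iff_jac :
    SymJacobi (coadjMatchedBracket brA brAs) ↔ ∀ p q r, Alia.Jac brA brAs p q r = 0 := by
  have key : ∀ p q r : A × Module.Dual K A, Alia.Jac brA brAs p q r
      = (coadjMatchedBracket brA brAs (coadjMatchedBracket brA brAs p q) r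
          + coadjMatchedBracket brA brAs (coadjMatchedBracket brA brAs q r) p
          + coadjMatchedBracket brA brAs (coadjMatchedBracket brA brAs r p) q)
        - (coadjMatchedBracket brA brAs (coadjMatchedBracket brA brAs q p) r
          + coadjMatchedBracket brA brAs (coadjMatchedBracket brA brAs r q) p
          + coadjMatchedBracket brA brAs (coadjMatchedBracket brA brAs p r) q) := by
    intro p q r
    rw [Alia.Jac]
    abel
  constructor
  · intro h p q r
    rw [key, h p q r, sub_self]
  · intro h p q r
    have := h p q r
    rw [key, sub_eq_zero] at this
    exact this

lemma Alia.jac_cyc (p q r : A × Module.Dual K A) :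
    Alia.Jac brA brAs p q r = Alia.Jac brA brAs q r p := by
  rw [Alia.Jac, Alia.Jac]; abel

lemma Alia.br_add_left (p p' q : A × Module.Dual K A) :
    coadjMatchedBracket brA brAs (p + p') q
      = coadjMatchedBracket brA brAs p q + coadjMatchedBracket brA brAs p' q := by
  rw [Prod.ext_iff]
  constructor
  · rw [← sub_eq_zero, ← Module.forall_dual_apply_eq_zero_iff K]
    intro a
    simp only [coadjMatchedBracket, Prod.fst_add, Prod.snd_add, LinearMap.coe_comp,
      Function.comp_apply, LinearEquiv.coe_coe, LinearMap.neg_apply, LinearMap.add_apply,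
      LinearMap.dualMap_apply, Module.apply_evalEquiv_symm_apply, Alia.pair_esymm,
      Module.evalEquiv_apply, Module.Dual.eval_apply, map_add, map_neg, map_sub, map_zero,
      LinearMap.zero_apply, LinearMap.flip_apply, LinearEquiv.apply_symm_apply]
    ring
  · apply LinearMap.ext
    intro z
    simp only [coadjMatchedBracket, Prod.fst_add, Prod.snd_add, LinearMap.coe_comp,
      Function.comp_apply, LinearEquiv.coe_coe, LinearMap.neg_apply, LinearMap.add_apply,
      LinearMap.dualMap_apply, Module.apply_evalEquiv_symm_apply, Alia.pair_esymm,
      Module.evalEquiv_apply, Module.Dual.eval_apply, map_add, map_neg, map_sub, map_zero,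
      LinearMap.zero_apply, LinearMap.flip_apply, LinearEquiv.apply_symm_apply]
    ring

lemma Alia.br_add_right (p q q' : A × Module.Dual K A) :
    coadjMatchedBracket brA brAs p (q + q')
      = coadjMatchedBracket brA brAs p q + coadjMatchedBracket brA brAs p q' := by
  rw [Prod.ext_iff]
  constructor
  · rw [← sub_eq_zero, ← Module.forall_dual_apply_eq_zero_iff K]
    intro a
    simp only [coadjMatchedBracket, Prod.fst_add, Prod.snd_add, LinearMap.coe_comp,
      Function.comp_apply, LinearEquiv.coe_coe, LinearMap.neg_apply, LinearMap.add_apply,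
      LinearMap.dualMap_apply, Module.apply_evalEquiv_symm_apply, Alia.pair_esymm,
      Module.evalEquiv_apply, Module.Dual.eval_apply, map_add, map_neg, map_sub, map_zero,
      LinearMap.zero_apply, LinearMap.flip_apply, LinearEquiv.apply_symm_apply]
    ring
  · apply LinearMap.ext
    intro z
    simp only [coadjMatchedBracket, Prod.fst_add, Prod.snd_add, LinearMap.coe_comp,
      Function.comp_apply, LinearEquiv.coe_coe, LinearMap.neg_apply, LinearMap.add_apply,
      LinearMap.dualMap_apply, Module.apply_evalEquiv_symm_apply, Alia.pair_esymm,
      Module.evalEquiv_apply, Module.Dual.eval_apply, map_add, map_neg, map_sub, map_zero,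
      LinearMap.zero_apply, LinearMap.flip_apply, LinearEquiv.apply_symm_apply]
    ring

lemma Alia.jac_add1 (p p' q r : A × Module.Dual K A) :
    Alia.Jac brA brAs (p + p') q r
      = Alia.Jac brA brAs p q r + Alia.Jac brA brAs p' q r := by
  simp only [Alia.Jac, Alia.br_add_left, Alia.br_add_right]
  abel

lemma Alia.jac_add2 (p q q' r : A × Module.Dual K A) :
    Alia.Jac brA brAs p (q + q') r
      = Alia.Jac brA brAs p q r + Alia.Jac brA brAs p q' r := by
  simp only [Alia.Jac, Alia.br_add_left, Alia.br_add_right]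
  abel

lemma Alia.jac_add3 (p q r r' : A × Module.Dual K A) :
    Alia.Jac brA brAs p q (r + r')
      = Alia.Jac brA brAs p q r + Alia.Jac brA brAs p q r' := by
  simp only [Alia.Jac, Alia.br_add_left, Alia.br_add_right]
  abel

end Aux

section Blocks
variable {K A : Type*} [Field K] [AddCommGroup A] [Module K A] [FiniteDimensional K A]
  (brA : A →ₗ[K] A →ₗ[K] A)
  (brAs : Module.Dual K A →ₗ[K] Module.Dual K A →ₗ[K] Module.Dual K A)

set_option maxHeartbeats 2000000 in
lemma Alia.jac_aaa (hA : SymJacobi (fun x y : A => brA x y)) (x y z : A) :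
    Alia.Jac brA brAs (x, 0) (y, 0) (z, 0) = 0 := by
  rw [Prod.ext_iff]
  constructor
  · rw [Prod.fst_zero, ← Module.forall_dual_apply_eq_zero_iff K]
    intro a
    have hc := congrArg (fun u => a u) (hA x y z)
    simp only [map_add] at hc
    simp only [Alia.Jac, coadjMatchedBracket, Prod.fst_add, Prod.snd_add, Prod.fst_sub,
      Prod.snd_sub, LinearMap.coe_comp,
      Function.comp_apply, LinearEquiv.coe_coe, LinearMap.neg_apply, LinearMap.add_apply,
      LinearMap.sub_apply, LinearMap.dualMap_apply, Module.apply_evalEquiv_symm_apply,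
      Alia.pair_esymm, Module.evalEquiv_apply, Module.Dual.eval_apply, map_add, map_neg,
      map_sub, map_zero, LinearMap.zero_apply, LinearMap.flip_apply,
      LinearEquiv.apply_symm_apply, Prod.fst_zero, Prod.snd_zero, Alia.dualMap_zero']
    linear_combination hc
  · apply LinearMap.ext
    intro w
    simp only [Alia.Jac, coadjMatchedBracket, Prod.fst_add, Prod.snd_add, Prod.fst_sub,
      Prod.snd_sub, LinearMap.coe_comp,
      Function.comp_apply, LinearEquiv.coe_coe, LinearMap.neg_apply, LinearMap.add_apply,
      LinearMap.sub_apply, LinearMap.dualMap_apply, Module.apply_evalEquiv_symm_apply,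
      Alia.pair_esymm, Module.evalEquiv_apply, Module.Dual.eval_apply, map_add, map_neg,
      map_sub, map_zero, LinearMap.zero_apply, LinearMap.flip_apply,
      LinearEquiv.apply_symm_apply, Prod.fst_zero, Prod.snd_zero, Alia.dualMap_zero']
    ring

set_option maxHeartbeats 2000000 in
lemma Alia.jac_ddd (hAs : SymJacobi (fun a b : Module.Dual K A => brAs a b))
    (a b c : Module.Dual K A) :
    Alia.Jac brA brAs ((0 : A), a) (0, b) (0, c) = 0 := by
  rw [Prod.ext_iff]
  constructor
  · rw [Prod.fst_zero, ← Module.forall_dual_apply_eq_zero_iff K]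
    intro φ
    have hc := congrArg (fun ψ : Module.Dual K A => ψ ((0:A))) (hAs a b c)
    simp only [Alia.Jac, coadjMatchedBracket, Prod.fst_add, Prod.snd_add, Prod.fst_sub,
      Prod.snd_sub, LinearMap.coe_comp,
      Function.comp_apply, LinearEquiv.coe_coe, LinearMap.neg_apply, LinearMap.add_apply,
      LinearMap.sub_apply, LinearMap.dualMap_apply, Module.apply_evalEquiv_symm_apply,
      Alia.pair_esymm, Module.evalEquiv_apply, Module.Dual.eval_apply, map_add, map_neg,
      map_sub, map_zero, LinearMap.zero_apply, LinearMap.flip_apply,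
      LinearEquiv.apply_symm_apply, Prod.fst_zero, Prod.snd_zero, Alia.dualMap_zero']
    ring
  · apply LinearMap.ext
    intro w
    have hc := congrArg (fun ψ : Module.Dual K A => ψ w) (hAs a b c)
    simp only [LinearMap.add_apply] at hc
    simp only [Alia.Jac, coadjMatchedBracket, Prod.fst_add, Prod.snd_add, Prod.fst_sub,
      Prod.snd_sub, LinearMap.coe_comp,
      Function.comp_apply, LinearEquiv.coe_coe, LinearMap.neg_apply, LinearMap.add_apply,
      LinearMap.sub_apply, LinearMap.dualMap_apply, Module.apply_evalEquiv_symm_apply,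
      Alia.pair_esymm, Module.evalEquiv_apply, Module.Dual.eval_apply, map_add, map_neg,
      map_sub, map_zero, LinearMap.zero_apply, LinearMap.flip_apply,
      LinearEquiv.apply_symm_apply, Prod.fst_zero, Prod.snd_zero, Alia.dualMap_zero']
    linear_combination hc

set_option maxHeartbeats 2000000 in
lemma Alia.jac_aad (hA : SymJacobi (fun x y : A => brA x y))
    (hstar : Alia.StarCond brA brAs) (x y : A) (c : Module.Dual K A) :
    Alia.Jac brA brAs (x, 0) (y, 0) ((0 : A), c) = 0 := by
  rw [Prod.ext_iff]
  constructor
  · rw [Prod.fst_zero, ← Module.forall_dual_apply_eq_zero_iff K]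
    intro a
    simp only [Alia.Jac, coadjMatchedBracket, Prod.fst_add, Prod.snd_add, Prod.fst_sub,
      Prod.snd_sub, LinearMap.coe_comp,
      Function.comp_apply, LinearEquiv.coe_coe, LinearMap.neg_apply, LinearMap.add_apply,
      LinearMap.sub_apply, LinearMap.dualMap_apply, Module.apply_evalEquiv_symm_apply,
      Alia.pair_esymm, Module.evalEquiv_apply, Module.Dual.eval_apply, map_add, map_neg,
      map_sub, map_zero, LinearMap.zero_apply, LinearMap.flip_apply,
      LinearEquiv.apply_symm_apply, Prod.fst_zero, Prod.snd_zero, Alia.dualMap_zero']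
    linear_combination -(hstar a c x y)
  · apply LinearMap.ext
    intro z
    have hc := congrArg (fun u => c u) (hA x y z)
    simp only [map_add] at hc
    simp only [Alia.Jac, coadjMatchedBracket, Prod.fst_add, Prod.snd_add, Prod.fst_sub,
      Prod.snd_sub, LinearMap.coe_comp,
      Function.comp_apply, LinearEquiv.coe_coe, LinearMap.neg_apply, LinearMap.add_apply,
      LinearMap.sub_apply, LinearMap.dualMap_apply, Module.apply_evalEquiv_symm_apply,
      Alia.pair_esymm, Module.evalEquiv_apply, Module.Dual.eval_apply, map_add, map_neg,
      map_sub, map_zero, LinearMap.zero_apply, LinearMap.flip_apply,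
      LinearEquiv.apply_symm_apply, Prod.fst_zero, Prod.snd_zero, Alia.dualMap_zero']
    linear_combination -hc

set_option maxHeartbeats 2000000 in
lemma Alia.jac_add' (hAs : SymJacobi (fun a b : Module.Dual K A => brAs a b))
    (hstar : Alia.StarCond brA brAs) (x : A) (b c : Module.Dual K A) :
    Alia.Jac brA brAs (x, 0) ((0 : A), b) ((0 : A), c) = 0 := by
  rw [Prod.ext_iff]
  constructor
  · rw [Prod.fst_zero, ← Module.forall_dual_apply_eq_zero_iff K]
    intro a
    have hc := congrArg (fun ψ : Module.Dual K A => ψ x) (hAs a b c)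
    simp only [LinearMap.add_apply] at hc
    simp only [Alia.Jac, coadjMatchedBracket, Prod.fst_add, Prod.snd_add, Prod.fst_sub,
      Prod.snd_sub, LinearMap.coe_comp,
      Function.comp_apply, LinearEquiv.coe_coe, LinearMap.neg_apply, LinearMap.add_apply,
      LinearMap.sub_apply, LinearMap.dualMap_apply, Module.apply_evalEquiv_symm_apply,
      Alia.pair_esymm, Module.evalEquiv_apply, Module.Dual.eval_apply, map_add, map_neg,
      map_sub, map_zero, LinearMap.zero_apply, LinearMap.flip_apply,
      LinearEquiv.apply_symm_apply, Prod.fst_zero, Prod.snd_zero, Alia.dualMap_zero']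
    linear_combination -hc
  · apply LinearMap.ext
    intro z
    simp only [Alia.Jac, coadjMatchedBracket, Prod.fst_add, Prod.snd_add, Prod.fst_sub,
      Prod.snd_sub, LinearMap.coe_comp,
      Function.comp_apply, LinearEquiv.coe_coe, LinearMap.neg_apply, LinearMap.add_apply,
      LinearMap.sub_apply, LinearMap.dualMap_apply, Module.apply_evalEquiv_symm_apply,
      Alia.pair_esymm, Module.evalEquiv_apply, Module.Dual.eval_apply, map_add, map_neg,
      map_sub, map_zero, LinearMap.zero_apply, LinearMap.flip_apply,
      LinearEquiv.apply_symm_apply, Prod.fst_zero, Prod.snd_zero, Alia.dualMap_zero']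
    linear_combination -(hstar c b x z)

set_option maxHeartbeats 2000000 in
lemma Alia.star_of_jac (hJ : ∀ p q r, Alia.Jac brA brAs p q r = 0) :
    Alia.StarCond brA brAs := by
  intro a b x y
  have h0 := congrArg (fun v : A × Module.Dual K A => a v.1)
    (hJ (x, 0) (y, 0) ((0 : A), b))
  simp only [Alia.Jac, coadjMatchedBracket, Prod.fst_add, Prod.snd_add, Prod.fst_sub,
      Prod.snd_sub, LinearMap.coe_comp,
      Function.comp_apply, LinearEquiv.coe_coe, LinearMap.neg_apply, LinearMap.add_apply,
      LinearMap.sub_apply, LinearMap.dualMap_apply, Module.apply_evalEquiv_symm_apply,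
      Alia.pair_esymm, Module.evalEquiv_apply, Module.Dual.eval_apply, map_add, map_neg,
      map_sub, map_zero, LinearMap.zero_apply, LinearMap.flip_apply,
      LinearEquiv.apply_symm_apply, Prod.fst_zero, Prod.snd_zero, Alia.dualMap_zero'] at h0
  linear_combination -h0

set_option maxHeartbeats 1000000 in
lemma Alia.bialg_iff_star (δ : A →ₗ[K] A ⊗[K] A)
    (hδ : ∀ (a b : Module.Dual K A) (x : A),
        brAs a b x = TensorProduct.dualDistrib K A A (a ⊗ₜ[K] b) (δ x)) :
    (∀ x y : A,
        ((TensorProduct.comm K A A).toLinearMap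
            - (LinearMap.id : A ⊗[K] A →ₗ[K] A ⊗[K] A))
          (δ (brA x y - brA y x)
            + TensorProduct.map (brA.flip x) (LinearMap.id : A →ₗ[K] A) (δ y)
            - TensorProduct.map (brA.flip y) (LinearMap.id : A →ₗ[K] A) (δ x)) = 0)
      ↔ Alia.StarCond brA brAs := by
  constructor
  · intro h a b x y
    have hh := congrArg (fun t => TensorProduct.dualDistrib K A A (a ⊗ₜ[K] b) t) (h x y)
    simp only [LinearMap.sub_apply, LinearEquiv.coe_coe, LinearMap.id_apply, map_add,
      map_sub, map_zero, Alia.ddcomm, Alia.ddmap, ← hδ] at hh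
    linear_combination hh
  · intro h x y
    apply Alia.tsep
    intro a b
    simp only [LinearMap.sub_apply, LinearEquiv.coe_coe, LinearMap.id_apply, map_add,
      map_sub, map_zero, Alia.ddcomm, Alia.ddmap, ← hδ]
    linear_combination h a b x y

end Blocks

/-- Let `(A,[·,·]_A)` be a finite-dimensional left-Alia algebra,
`(A*,[·,·]_{A*})` a left-Alia algebra structure on the dual space, and `δ : A → A ⊗ A`
the linear dual of `[·,·]_{A*}`.  Then `((A,[·,·]_A),(A*,[·,·]_{A*}), L_A*,
L_A* − R_A*, L_{A*}*, L_{A*}* − R_{A*}*)` is a matched pair of left-Alia algebras iff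
`(A,[·,·]_A,δ)` is a left-Alia bialgebra, i.e.
`(τ − id)(δ([x,y] − [y,x]) + (R(x) ⊗ id)δ(y) − (R(y) ⊗ id)δ(x)) = 0` for all `x,y`. -/
theorem matchedPair_iff_bialgebra {K A : Type*} [Field K]
    [AddCommGroup A] [Module K A] [FiniteDimensional K A]
    (brA : A →ₗ[K] A →ₗ[K] A) (hA : SymJacobi (fun x y : A => brA x y))
    (brAs : Module.Dual K A →ₗ[K] Module.Dual K A →ₗ[K] Module.Dual K A)
    (hAs : SymJacobi (fun a b : Module.Dual K A => brAs a b))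
    (δ : A →ₗ[K] A ⊗[K] A)
    (hδ : ∀ (a b : Module.Dual K A) (x : A),
        brAs a b x = TensorProduct.dualDistrib K A A (a ⊗ₜ[K] b) (δ x)) :
    SymJacobi (coadjMatchedBracket brA brAs) ↔
      ∀ x y : A,
        ((TensorProduct.comm K A A).toLinearMap
            - (LinearMap.id : A ⊗[K] A →ₗ[K] A ⊗[K] A))
          (δ (brA x y - brA y x)
            + TensorProduct.map (brA.flip x) (LinearMap.id : A →ₗ[K] A) (δ y)
            - TensorProduct.map (brA.flip y) (LinearMap.id : A →ₗ[K] A) (δ x)) = 0 := by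
  rw [Alia.symJacobi_iff_jac, Alia.bialg_iff_star brA brAs δ hδ]
  constructor
  · exact Alia.star_of_jac brA brAs
  · intro hstar p q r
    obtain ⟨p1, p2⟩ := p
    obtain ⟨q1, q2⟩ := q
    obtain ⟨r1, r2⟩ := r
    have hp : (p1, p2) = (p1, (0 : Module.Dual K A)) + ((0 : A), p2) := by simp
    have hq : (q1, q2) = (q1, (0 : Module.Dual K A)) + ((0 : A), q2) := by simp
    have hr : (r1, r2) = (r1, (0 : Module.Dual K A)) + ((0 : A), r2) := by simp
    rw [hp, hq, hr]
    simp only [Alia.jac_add1, Alia.jac_add2, Alia.jac_add3]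
    have c1 := Alia.jac_aaa brA brAs hA p1 q1 r1
    have c2 := Alia.jac_aad brA brAs hA hstar p1 q1 r2
    have c3 : Alia.Jac brA brAs (p1, (0 : Module.Dual K A)) ((0 : A), q2)
        (r1, (0 : Module.Dual K A)) = 0 := by
      rw [Alia.jac_cyc, Alia.jac_cyc]; exact Alia.jac_aad brA brAs hA hstar r1 p1 q2
    have c4 : Alia.Jac brA brAs ((0 : A), p2) (q1, (0 : Module.Dual K A))
        (r1, (0 : Module.Dual K A)) = 0 := by
      rw [Alia.jac_cyc]; exact Alia.jac_aad brA brAs hA hstar q1 r1 p2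
    have c5 := Alia.jac_add' brA brAs hAs hstar p1 q2 r2
    have c6 : Alia.Jac brA brAs ((0 : A), p2) (q1, (0 : Module.Dual K A))
        ((0 : A), r2) = 0 := by
      rw [Alia.jac_cyc]; exact Alia.jac_add' brA brAs hAs hstar q1 r2 p2
    have c7 : Alia.Jac brA brAs ((0 : A), p2) ((0 : A), q2)
        (r1, (0 : Module.Dual K A)) = 0 := by
      rw [Alia.jac_cyc, Alia.jac_cyc]; exact Alia.jac_add' brA brAs hAs hstar r1 p2 q2
    have c8 := Alia.jac_ddd brA brAs hAs p2 q2 r2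
    rw [c1, c2, c3, c4, c5, c6, c7, c8]
    simp
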